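/- (Shifted small-ball bound for a multivariate Gaussian.) Let X be a centered Gaussian random vector in ℝ^m with positive definite covariance matrix Σ. Then for every θ ∈ ℝ^m and every δ > 0, P( max_{1 ≤ i ≤ m} |X_i − θ_i| ≤ δ ) ≥ exp( −θᵀ Σ^{−1} θ / 2 ) · P( max_{1 ≤ i ≤ m} |X_i| ≤ δ ). -/

import Mathlib

open MeasureTheory Matrix
open scoped ENNReal

/-- The density of the centered multivariate normal distribution `N(0, Σ)` on `ℝ^m`,
for a positive definite covariance matrix `Σ`. -/
noncomputable def gaussianDensity (m : ℕ) (S : Matrix (Fin m) (Fin m) ℝ)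
    (x : Fin m → ℝ) : ℝ :=
  (Real.sqrt ((2 * Real.pi) ^ m * S.det))⁻¹ * Real.exp (-(x ⬝ᵥ (S⁻¹ *ᵥ x)) / 2)

/-- The law of a centered Gaussian random vector in `ℝ^m` with covariance `Σ`:
the measure with density `gaussianDensity` with respect to Lebesgue measure. -/
noncomputable def gaussianLaw (m : ℕ) (S : Matrix (Fin m) (Fin m) ℝ) :
    Measure (Fin m → ℝ) :=
  volume.withDensity fun x => ENNReal.ofReal (gaussianDensity m S x)

/-!
Write `q v = vᵀ Σ⁻¹ v` and `φ` for the Gaussian density. By the parallelogram law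
`q (θ + x) + q (θ - x) = 2 q θ + 2 q x`, so convexity of `exp` gives
`2 e^{-q θ / 2} φ x ≤ φ (θ + x) + φ (θ - x)`. Integrate over the centred box `B`: since `B` is
symmetric and Lebesgue measure is invariant under `x ↦ θ + x` and `x ↦ θ - x`, both terms on the
right integrate to the mass of the shifted box `θ + B`.
-/

theorem Matrix.dotProduct_mulVec_add_add_dotProduct_mulVec_sub {n R : Type*} [Fintype n]
    [Ring R] (A : Matrix n n R) (u v : n → R) :
    (u + v) ⬝ᵥ (A *ᵥ (u + v)) + (u - v) ⬝ᵥ (A *ᵥ (u - v))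
      = 2 * (u ⬝ᵥ (A *ᵥ u)) + 2 * (v ⬝ᵥ (A *ᵥ v)) := by
  simp only [mulVec_add, mulVec_sub, add_dotProduct, sub_dotProduct, dotProduct_add,
    dotProduct_sub]
  noncomm_ring

theorem Real.two_mul_exp_midpoint_le (a b : ℝ) :
    2 * Real.exp ((a + b) / 2) ≤ Real.exp a + Real.exp b :=
  calc 2 * Real.exp ((a + b) / 2) = 2 * Real.exp (a / 2) * Real.exp (b / 2) := by
        rw [mul_assoc, ← Real.exp_add, add_div]
    _ ≤ Real.exp (a / 2) ^ 2 + Real.exp (b / 2) ^ 2 := two_mul_le_add_sq _ _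
    _ = Real.exp a + Real.exp b := by rw [← Real.exp_nat_mul, ← Real.exp_nat_mul]; ring_nf

theorem continuous_gaussianDensity (m : ℕ) (S : Matrix (Fin m) (Fin m) ℝ) :
    Continuous (gaussianDensity m S) := by
  unfold gaussianDensity
  fun_prop

theorem gaussianDensity_nonneg (m : ℕ) (S : Matrix (Fin m) (Fin m) ℝ) (x : Fin m → ℝ) :
    0 ≤ gaussianDensity m S x := by
  unfold gaussianDensity
  positivity

theorem two_mul_exp_mul_gaussianDensity_le (m : ℕ) (S : Matrix (Fin m) (Fin m) ℝ)
    (θ x : Fin m → ℝ) :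
    2 * Real.exp (-(θ ⬝ᵥ (S⁻¹ *ᵥ θ)) / 2) * gaussianDensity m S x
      ≤ gaussianDensity m S (θ + x) + gaussianDensity m S (θ - x) := by
  set K := (Real.sqrt ((2 * Real.pi) ^ m * S.det))⁻¹
  set a := -((θ + x) ⬝ᵥ (S⁻¹ *ᵥ (θ + x))) / 2
  set b := -((θ - x) ⬝ᵥ (S⁻¹ *ᵥ (θ - x))) / 2
  have hab : (a + b) / 2 = -(θ ⬝ᵥ (S⁻¹ *ᵥ θ)) / 2 + -(x ⬝ᵥ (S⁻¹ *ᵥ x)) / 2 := by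
    have := S⁻¹.dotProduct_mulVec_add_add_dotProduct_mulVec_sub θ x
    simp only [a, b]
    linarith
  calc 2 * Real.exp (-(θ ⬝ᵥ (S⁻¹ *ᵥ θ)) / 2) * gaussianDensity m S x
      = K * (2 * Real.exp ((a + b) / 2)) := by
        rw [gaussianDensity, hab, Real.exp_add]; ring
    _ ≤ K * (Real.exp a + Real.exp b) :=
        mul_le_mul_of_nonneg_left (Real.two_mul_exp_midpoint_le a b) (by positivity)
    _ = gaussianDensity m S (θ + x) + gaussianDensity m S (θ - x) := by
        simp only [gaussianDensity]; ring

theorem MeasureTheory.mul_setLIntegral_le_setLIntegral_preimage_sub {G : Type*}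
    [MeasurableSpace G] [AddCommGroup G] [MeasurableAdd G] [MeasurableNeg G]
    (μ : Measure G) [μ.IsAddLeftInvariant] [μ.IsNegInvariant] {f : G → ℝ≥0∞}
    (hf : Measurable f) {s : Set G} (hs : MeasurableSet s) (hs_neg : -s = s) (θ : G)
    {c : ℝ≥0∞} (h : ∀ x ∈ s, 2 * c * f x ≤ f (θ + x) + f (θ - x)) :
    c * ∫⁻ x in s, f x ∂μ ≤ ∫⁻ x in (· - θ) ⁻¹' s, f x ∂μ := by
  have hT : MeasurableSet ((· - θ) ⁻¹' s) := measurable_sub_const θ hs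
  have h_add : ∫⁻ x in s, f (θ + x) ∂μ = ∫⁻ x in (· - θ) ⁻¹' s, f x ∂μ := by
    rw [← (measurePreserving_add_left μ θ).setLIntegral_comp_preimage hT hf]
    congr! 2
    ext x
    simp
  have h_sub : ∫⁻ x in s, f (θ - x) ∂μ = ∫⁻ x in (· - θ) ⁻¹' s, f x ∂μ := by
    rw [← (Measure.measurePreserving_sub_left μ θ).setLIntegral_comp_preimage hT hf]
    congr! 2
    ext x
    rw [Set.mem_preimage, Set.mem_preimage, sub_sub_cancel_left, ← Set.mem_neg, hs_neg]
  have key : 2 * (c * ∫⁻ x in s, f x ∂μ) ≤ 2 * ∫⁻ x in (· - θ) ⁻¹' s, f x ∂μ :=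
    calc 2 * (c * ∫⁻ x in s, f x ∂μ) = ∫⁻ x in s, 2 * c * f x ∂μ := by
          rw [lintegral_const_mul _ hf, mul_assoc]
      _ ≤ ∫⁻ x in s, (f (θ + x) + f (θ - x)) ∂μ := setLIntegral_mono' hs h
      _ = 2 * ∫⁻ x in (· - θ) ⁻¹' s, f x ∂μ := by
          rw [lintegral_add_left (by fun_prop : Measurable fun x => f (θ + x)), h_add, h_sub,
            two_mul]
  exact (ENNReal.mul_le_mul_iff_right two_ne_zero ENNReal.ofNat_ne_top).mp key

theorem gaussian_shifted_small_ball_general (m : ℕ) (S : Matrix (Fin m) (Fin m) ℝ)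
    (θ : Fin m → ℝ) (δ : ℝ) :
    ENNReal.ofReal (Real.exp (-(θ ⬝ᵥ (S⁻¹ *ᵥ θ)) / 2))
        * gaussianLaw m S {x | ∀ i, |x i| ≤ δ}
      ≤ gaussianLaw m S {x | ∀ i, |x i - θ i| ≤ δ} := by
  set B : Set (Fin m → ℝ) := {x | ∀ i, |x i| ≤ δ}
  have hB : MeasurableSet B := by
    simp only [B, Set.ofPred_forall]
    exact .iInter fun i => measurableSet_le (by fun_prop) measurable_const
  have hB_neg : -B = B := by
    ext x
    simp [B]
  have hT : {x | ∀ i, |x i - θ i| ≤ δ} = (· - θ) ⁻¹' B := rfl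
  rw [gaussianLaw, withDensity_apply _ hB, hT, withDensity_apply _ (measurable_sub_const θ hB)]
  refine mul_setLIntegral_le_setLIntegral_preimage_sub volume
    (continuous_gaussianDensity m S).measurable.ennreal_ofReal hB hB_neg θ fun x _ => ?_
  rw [← ENNReal.ofReal_ofNat 2, ← ENNReal.ofReal_mul zero_le_two,
    ← ENNReal.ofReal_mul (by positivity),
    ← ENNReal.ofReal_add (gaussianDensity_nonneg ..) (gaussianDensity_nonneg ..)]
  exact ENNReal.ofReal_le_ofReal (two_mul_exp_mul_gaussianDensity_le m S θ x)

/-- Shifted small-ball bound for a multivariate Gaussian (Anderson-type inequality):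
if `X ∼ N(0, Σ)` with `Σ` positive definite, then for every shift `θ` and every `δ > 0`,
`P(max_i |X_i − θ_i| ≤ δ) ≥ exp(−θᵀ Σ⁻¹ θ / 2) · P(max_i |X_i| ≤ δ)`. -/
theorem gaussian_shifted_small_ball (m : ℕ) (S : Matrix (Fin m) (Fin m) ℝ)
    (hS : S.PosDef) (θ : Fin m → ℝ) (δ : ℝ) (hδ : 0 < δ) :
    ENNReal.ofReal (Real.exp (-(θ ⬝ᵥ (S⁻¹ *ᵥ θ)) / 2))
        * gaussianLaw m S {x | ∀ i, |x i| ≤ δ}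
      ≤ gaussianLaw m S {x | ∀ i, |x i - θ i| ≤ δ} :=
  gaussian_shifted_small_ball_general m S θ δ
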